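/- Let λ = (λ_1,…,λ_n), μ = (μ_1,…,μ_n) ∈ P(m|n) with μ_n ≥ λ_n. If μ_n = λ_n then K^{-1}_{λ,μ} = K^{-1}_{(λ_1,…,λ_{n−1}),(μ_1,…,μ_{n−1})} (an inverse Kostka number of partitions of m − λ_n in n−1 variables), and if μ_n > λ_n then K^{-1}_{λ,μ} = 0. -/

import Mathlib

/-!
Since `a_{μ+δ}` is the only `a_{ν+δ}` (`ν` a partition) containing the strictly increasing monomial
`x^{μ+δ}`, and with coefficient `1`, `K⁻¹_{λ,μ}` is the coefficient of `x^{μ+δ}` in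
`m_λ · a_δ = Σ_{β,σ} sign σ · x^{β + δ∘σ}`, where `β` runs over the rearrangements of `λ`.
In the last coordinate `β_n ≤ λ_n ≤ μ_n` and `δ_{σ(n)} ≤ δ_n`, so nothing contributes when
`μ_n > λ_n`, and when `μ_n = λ_n` exactly the pairs with `β_n = λ_n`, `σ(n) = n` contribute; these
are the pairs computing the same coefficient for `(λ₁,…,λ_{n-1})` and `(μ₁,…,μ_{n-1})`.
-/

open Finset MvPolynomial

/-- The `p`-th entry of an `n`-tuple, with default value `0` out of range. -/
def nth (n : ℕ) (f : Fin n → ℕ) (p : ℕ) : ℕ := if h : p < n then f ⟨p, h⟩ else 0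

/-- `a_α = det (x_j ^ α_i)`. -/
noncomputable def aDet (n : ℕ) (α : Fin n → ℕ) : MvPolynomial (Fin n) ℤ :=
  (Matrix.of fun i j : Fin n => (X j : MvPolynomial (Fin n) ℤ) ^ α i).det

/-- `x ^ β = ∏ x_i ^ β_i`. -/
noncomputable def xpow (n : ℕ) (β : Fin n → ℕ) : MvPolynomial (Fin n) ℤ :=
  ∏ i, X i ^ β i

/-- The monomial symmetric polynomial `m_lam(n) = Σ_{w ∈ Sₙ^lam} x^{w(lam)}`:
the sum of `x^β` over all distinct rearrangements `β` of `lam`. -/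
noncomputable def msym (n : ℕ) (lam : Fin n → ℕ) : MvPolynomial (Fin n) ℤ :=
  ∑ β ∈ Finset.univ.image (fun σ : Equiv.Perm (Fin n) => lam ∘ σ), xpow n β

/-- `δ(n) = (0, 1, …, n-1)`. -/
def deltaN (n : ℕ) : Fin n → ℕ := fun i => (i : ℕ)

/-- `P(m∣n)`: partitions of `m` as nondecreasing `n`-tuples (zeros at the beginning). -/
def Par (n m : ℕ) : Finset (Fin n → ℕ) :=
  (Fintype.piFinset fun _ : Fin n => Finset.range (m + 1)).filter
    fun μ => (∀ i j : Fin n, i ≤ j → μ i ≤ μ j) ∧ ∑ i, μ i = m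

/-- `K` is the inverse Kostka matrix in `n` variables: for every weight `m` and
every `lam ∈ P(m∣n)`, `m_lam(n) · a_{δ(n)} = Σ_{μ ∈ P(m∣n)} K lam μ · a_{μ+δ(n)}`
(equivalently `m_lam(n) = Σ_μ K lam μ · s_μ(n)`). -/
def IsInvKostka (n : ℕ) (K : (Fin n → ℕ) → (Fin n → ℕ) → ℤ) : Prop :=
  ∀ m : ℕ, ∀ lam ∈ Par n m,
    msym n lam * aDet n (deltaN n) =
      ∑ μ ∈ Par n m, C (K lam μ) * aDet n (fun i => μ i + (i : ℕ))

open Equiv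
open Finsupp (equivFunOnFinite)

namespace Equiv.Perm

variable {n : ℕ}

def extendLast (σ : Perm (Fin n)) : Perm (Fin (n + 1)) :=
  σ.extendDomain (finSuccAboveEquiv (Fin.last n))

@[simp] theorem extendLast_castSucc (σ : Perm (Fin n)) (i : Fin n) :
    σ.extendLast i.castSucc = (σ i).castSucc := by
  simpa [extendLast, finSuccAboveEquiv_apply] using
    σ.extendDomain_apply_image (finSuccAboveEquiv (Fin.last n)) i

@[simp] theorem extendLast_last (σ : Perm (Fin n)) : σ.extendLast (Fin.last n) = Fin.last n :=
  σ.extendDomain_apply_not_subtype _ (by simp)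

@[simp] theorem sign_extendLast (σ : Perm (Fin n)) : sign σ.extendLast = sign σ :=
  sign_extendDomain σ _

theorem extendLast_injective : Function.Injective (extendLast (n := n)) :=
  extendDomainHom_injective _

theorem exists_extendLast_eq {σ : Perm (Fin (n + 1))} (h : σ (Fin.last n) = Fin.last n) :
    ∃ τ : Perm (Fin n), τ.extendLast = σ := by
  have hσ : ∀ x, σ x ≠ Fin.last n ↔ x ≠ Fin.last n := fun x => by
    rw [← h, σ.injective.ne_iff, h]
  refine ⟨(finSuccAboveEquiv (Fin.last n)).permCongr.symm (σ.subtypePerm hσ), ?_⟩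
  ext j
  cases j using Fin.lastCases with
  | last => simp [h]
  | cast i =>
    rw [extendLast_castSucc]
    simp [finSuccAboveEquiv_symm_apply_last, finSuccAboveEquiv_apply]

theorem eq_one_of_strictMono_comp {β : Type*} [Preorder β] {α : Fin n → β} {σ : Perm (Fin n)}
    (hα : StrictMono α) (hασ : StrictMono (α ∘ σ)) : σ = 1 := by
  have hσ : StrictMono σ := fun i j hij => hα.lt_iff_lt.1 (hασ hij)
  exact Perm.ext (congrFun ((hσ.range_inj strictMono_id).1 (by simp)))

end Equiv.Perm

section Rearrangements

variable {ι α : Type*} [Fintype ι] [DecidableEq ι] [DecidableEq α]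

def rearrangements (f : ι → α) : Finset (ι → α) :=
  univ.image fun σ : Perm ι => f ∘ σ

theorem mem_rearrangements {f g : ι → α} : g ∈ rearrangements f ↔ ∃ σ : Perm ι, f ∘ σ = g := by
  simp [rearrangements]

theorem exists_perm_comp_eq_of_apply_eq {f g : ι → α} (hg : g ∈ rearrangements f) {a : ι}
    (ha : g a = f a) : ∃ σ : Perm ι, f ∘ σ = g ∧ σ a = a := by
  obtain ⟨τ, rfl⟩ := mem_rearrangements.1 hg
  refine ⟨swap (τ a) a * τ, ?_, by simp⟩
  have hswap : f ∘ swap (τ a) a = f := by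
    rw [Function.comp_apply] at ha
    rw [comp_swap_eq_update, ha, Function.update_eq_self, ← ha, Function.update_eq_self]
  rw [Perm.coe_mul, ← Function.comp_assoc, hswap]

end Rearrangements

theorem msym_eq_sum_rearrangements (k : ℕ) (lam : Fin k → ℕ) :
    msym k lam = ∑ β ∈ rearrangements lam, xpow k β :=
  rfl

section SplitLast

variable {n : ℕ} {lam β : Fin (n + 1) → ℕ}

theorem apply_le_last_of_mem_rearrangements (hlam : Monotone lam)
    (hβ : β ∈ rearrangements lam) (i : Fin (n + 1)) : β i ≤ lam (Fin.last n) := by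
  obtain ⟨σ, rfl⟩ := mem_rearrangements.1 hβ
  exact hlam (Fin.le_last _)

theorem snoc_mem_rearrangements {β' : Fin n → ℕ} (hβ' : β' ∈ rearrangements (Fin.init lam)) :
    Fin.snoc β' (lam (Fin.last n)) ∈ rearrangements lam := by
  obtain ⟨τ, rfl⟩ := mem_rearrangements.1 hβ'
  refine mem_rearrangements.2 ⟨τ.extendLast, funext fun j => ?_⟩
  cases j using Fin.lastCases <;> simp [Fin.init]

theorem init_mem_rearrangements (hβ : β ∈ rearrangements lam)
    (hlast : β (Fin.last n) = lam (Fin.last n)) :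
    Fin.init β ∈ rearrangements (Fin.init lam) := by
  obtain ⟨σ, rfl, hσ⟩ := exists_perm_comp_eq_of_apply_eq hβ hlast
  obtain ⟨τ, rfl⟩ := Perm.exists_extendLast_eq hσ
  exact mem_rearrangements.2 ⟨τ, funext fun i => by simp [Fin.init]⟩

theorem sum_rearrangements_eq_sum_init {M : Type*} [AddCommMonoid M]
    (f : (Fin (n + 1) → ℕ) → M)
    (hf : ∀ β ∈ rearrangements lam, f β ≠ 0 → β (Fin.last n) = lam (Fin.last n)) :
    ∑ β ∈ rearrangements lam, f β =
      ∑ β' ∈ rearrangements (Fin.init lam), f (Fin.snoc β' (lam (Fin.last n))) := by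
  symm
  refine sum_bij_ne_zero (fun β' _ _ => Fin.snoc β' (lam (Fin.last n)))
    (fun β' hβ' _ => snoc_mem_rearrangements hβ') (fun β₁ _ _ β₂ _ _ h => ?_)
    (fun β hβ hf0 => ⟨Fin.init β, init_mem_rearrangements hβ (hf β hβ hf0), ?_, ?_⟩)
    (fun _ _ _ => rfl)
  · simpa using congrArg Fin.init h
  · rwa [← hf β hβ hf0, Fin.snoc_init_self]
  · rw [← hf β hβ hf0, Fin.snoc_init_self]

theorem sum_perm_eq_sum_extendLast {M : Type*} [AddCommMonoid M] (f : Perm (Fin (n + 1)) → M)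
    (hf : ∀ σ, f σ ≠ 0 → σ (Fin.last n) = Fin.last n) :
    ∑ σ, f σ = ∑ τ : Perm (Fin n), f τ.extendLast := by
  symm
  refine sum_bij_ne_zero (fun τ _ _ => τ.extendLast) (fun _ _ _ => mem_univ _)
    (fun _ _ _ _ _ _ h => Perm.extendLast_injective h)
    (fun σ _ hf0 => ?_) (fun _ _ _ => rfl)
  obtain ⟨τ, rfl⟩ := Perm.exists_extendLast_eq (hf σ hf0)
  exact ⟨τ, mem_univ _, hf0, rfl⟩

end SplitLast

section Coefficients

variable {k : ℕ}

theorem xpow_eq_monomial (β : Fin k → ℕ) : xpow k β = monomial (equivFunOnFinite.symm β) 1 := by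
  rw [xpow, monomial_eq, C_1, one_mul, Finsupp.prod_fintype _ _ fun _ => pow_zero _]
  rfl

theorem aDet_eq_sum_monomial (α : Fin k → ℕ) :
    aDet k α = ∑ σ : Perm (Fin k), monomial (equivFunOnFinite.symm (α ∘ σ)) (Perm.sign σ : ℤ) := by
  refine (Matrix.det_apply _).trans (sum_congr rfl fun σ _ => ?_)
  change _ • xpow k (α ∘ σ) = _
  rw [xpow_eq_monomial, Units.smul_def, smul_monomial, smul_eq_mul, mul_one]

theorem coeff_xpow_mul_aDet (β α γ : Fin k → ℕ) :
    coeff (equivFunOnFinite.symm γ) (xpow k β * aDet k α) =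
      ∑ σ : Perm (Fin k), if β + α ∘ σ = γ then (Perm.sign σ : ℤ) else 0 := by
  rw [xpow_eq_monomial, aDet_eq_sum_monomial, mul_sum, coeff_sum]
  refine sum_congr rfl fun σ _ => ?_
  have hadd : equivFunOnFinite.symm β + equivFunOnFinite.symm (α ∘ σ) =
      equivFunOnFinite.symm (β + α ∘ σ) := Finsupp.ext fun _ => rfl
  rw [monomial_mul, one_mul, coeff_monomial, hadd]
  exact if_congr equivFunOnFinite.symm.injective.eq_iff rfl rfl

theorem coeff_msym_mul_aDet (lam α γ : Fin k → ℕ) :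
    coeff (equivFunOnFinite.symm γ) (msym k lam * aDet k α) =
      ∑ β ∈ rearrangements lam, ∑ σ : Perm (Fin k),
        if β + α ∘ σ = γ then (Perm.sign σ : ℤ) else 0 := by
  simp_rw [msym_eq_sum_rearrangements, sum_mul, coeff_sum, coeff_xpow_mul_aDet]

theorem coeff_aDet_of_strictMono {α γ : Fin k → ℕ} (hα : StrictMono α) (hγ : StrictMono γ) :
    coeff (equivFunOnFinite.symm γ) (aDet k α) = if α = γ then 1 else 0 := by
  rw [aDet_eq_sum_monomial, coeff_sum, sum_eq_single 1]
  · simp [coeff_monomial, equivFunOnFinite.symm.injective.eq_iff]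
  · intro σ _ hσ
    rw [coeff_monomial, if_neg (equivFunOnFinite.symm.injective.ne fun h => ?_)]
    subst h
    exact hσ (Perm.eq_one_of_strictMono_comp hα hγ)
  · simp

end Coefficients

theorem mem_Par_iff {k m : ℕ} {μ : Fin k → ℕ} : μ ∈ Par k m ↔ Monotone μ ∧ ∑ i, μ i = m := by
  refine ⟨fun h => ⟨fun i j => (mem_filter.1 h).2.1 i j, (mem_filter.1 h).2.2⟩,
    fun ⟨hmono, hsum⟩ => mem_filter.2 ⟨Fintype.mem_piFinset.2 fun i => ?_, @hmono, hsum⟩⟩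
  exact mem_range.2 <| Nat.lt_succ_of_le <|
    hsum ▸ single_le_sum (fun _ _ => Nat.zero_le _) (mem_univ i)

theorem init_mem_Par {n m : ℕ} {μ : Fin (n + 1) → ℕ} (h : μ ∈ Par (n + 1) m) :
    Fin.init μ ∈ Par n (m - μ (Fin.last n)) := by
  obtain ⟨hmono, hsum⟩ := mem_Par_iff.1 h
  refine mem_Par_iff.2 ⟨fun i j hij => hmono (Fin.castSucc_le_castSucc_iff.2 hij), ?_⟩
  rw [Fin.sum_univ_castSucc] at hsum
  exact (Nat.sub_eq_of_eq_add hsum.symm).symm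

theorem strictMono_add_deltaN {k : ℕ} {μ : Fin k → ℕ} (hμ : Monotone μ) :
    StrictMono (μ + deltaN k) :=
  hμ.add_strictMono Fin.val_strictMono

theorem IsInvKostka.eq_coeff {k m : ℕ} {K : (Fin k → ℕ) → (Fin k → ℕ) → ℤ} (hK : IsInvKostka k K)
    {lam ν : Fin k → ℕ} (hlam : lam ∈ Par k m) (hν : ν ∈ Par k m) :
    K lam ν = coeff (equivFunOnFinite.symm (ν + deltaN k)) (msym k lam * aDet k (deltaN k)) := by
  have hνδ := strictMono_add_deltaN (mem_Par_iff.1 hν).1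
  rw [hK m lam hlam]
  change _ = coeff _ (∑ μ ∈ Par k m, C (K lam μ) * aDet k (μ + deltaN k))
  rw [coeff_sum, sum_eq_single_of_mem ν hν]
  · rw [coeff_C_mul, coeff_aDet_of_strictMono hνδ hνδ, if_pos rfl, mul_one]
  · intro μ hμ hμν
    rw [coeff_C_mul, coeff_aDet_of_strictMono (strictMono_add_deltaN (mem_Par_iff.1 hμ).1) hνδ,
      if_neg fun h => hμν (add_left_injective (deltaN k) h), mul_zero]

section Last

variable {n : ℕ} {lam ν : Fin (n + 1) → ℕ}

theorem last_eq_of_add_deltaN_comp_eq {β : Fin (n + 1) → ℕ} {σ : Perm (Fin (n + 1))}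
    (h : β + deltaN (n + 1) ∘ σ = ν + deltaN (n + 1)) (hβ : β (Fin.last n) ≤ ν (Fin.last n)) :
    β (Fin.last n) = ν (Fin.last n) ∧ σ (Fin.last n) = Fin.last n := by
  have hlast : β (Fin.last n) + σ (Fin.last n) = ν (Fin.last n) + n := congrFun h (Fin.last n)
  have hσ : (σ (Fin.last n) : ℕ) ≤ n := Fin.is_le _
  exact ⟨by omega, Fin.ext (by rw [Fin.val_last]; omega)⟩

theorem coeff_msym_mul_aDet_deltaN_of_lt (hlam : Monotone lam)
    (hlt : lam (Fin.last n) < ν (Fin.last n)) :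
    coeff (equivFunOnFinite.symm (ν + deltaN (n + 1)))
      (msym (n + 1) lam * aDet (n + 1) (deltaN (n + 1))) = 0 := by
  rw [coeff_msym_mul_aDet]
  refine sum_eq_zero fun β hβ => sum_eq_zero fun σ _ => if_neg fun h => ?_
  have hβlast := apply_le_last_of_mem_rearrangements hlam hβ (Fin.last n)
  have := (last_eq_of_add_deltaN_comp_eq h (hβlast.trans hlt.le)).1
  omega

theorem snoc_add_deltaN_comp_extendLast_eq_iff {β' : Fin n → ℕ} {τ : Perm (Fin n)} :
    Fin.snoc β' (ν (Fin.last n)) + deltaN (n + 1) ∘ τ.extendLast = ν + deltaN (n + 1) ↔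
      β' + deltaN n ∘ τ = Fin.init ν + deltaN n := by
  simp [funext_iff, Fin.forall_fin_succ', deltaN, Fin.init]

theorem coeff_msym_mul_aDet_deltaN_of_last_eq (hlam : Monotone lam)
    (hν : ν (Fin.last n) = lam (Fin.last n)) :
    coeff (equivFunOnFinite.symm (ν + deltaN (n + 1)))
        (msym (n + 1) lam * aDet (n + 1) (deltaN (n + 1))) =
      coeff (equivFunOnFinite.symm (Fin.init ν + deltaN n))
        (msym n (Fin.init lam) * aDet n (deltaN n)) := by
  rw [coeff_msym_mul_aDet, coeff_msym_mul_aDet, sum_rearrangements_eq_sum_init]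
  · refine sum_congr rfl fun β' _ => ?_
    rw [sum_perm_eq_sum_extendLast]
    · refine sum_congr rfl fun τ _ => ?_
      rw [← hν, Perm.sign_extendLast]
      exact if_congr snoc_add_deltaN_comp_extendLast_eq_iff rfl rfl
    · intro σ hσ
      exact (last_eq_of_add_deltaN_comp_eq (ite_ne_right_iff.1 hσ).1 (by simp [hν])).2
  · intro β hβ hne
    obtain ⟨σ, -, hσ⟩ := exists_ne_zero_of_sum_ne_zero hne
    have hβlast := hν ▸ apply_le_last_of_mem_rearrangements hlam hβ (Fin.last n)
    exact (last_eq_of_add_deltaN_comp_eq (ite_ne_right_iff.1 hσ).1 hβlast).1.trans hν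

end Last

theorem stmt7_general (n m : ℕ)
    (K : (Fin (n + 1) → ℕ) → (Fin (n + 1) → ℕ) → ℤ) (hK : IsInvKostka (n + 1) K)
    (K' : (Fin n → ℕ) → (Fin n → ℕ) → ℤ) (hK' : IsInvKostka n K')
    (lam μ : Fin (n + 1) → ℕ) (hlam : lam ∈ Par (n + 1) m) (hμ : μ ∈ Par (n + 1) m) :
    (μ (Fin.last n) = lam (Fin.last n) →
        K lam μ = K' (fun i => lam i.castSucc) (fun i => μ i.castSucc)) ∧
    (lam (Fin.last n) < μ (Fin.last n) → K lam μ = 0) := by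
  have hmono := (mem_Par_iff.1 hlam).1
  rw [hK.eq_coeff hlam hμ]
  refine ⟨fun heq => ?_, coeff_msym_mul_aDet_deltaN_of_lt hmono⟩
  rw [coeff_msym_mul_aDet_deltaN_of_last_eq hmono heq]
  exact (hK'.eq_coeff (init_mem_Par hlam) (heq ▸ init_mem_Par hμ)).symm

/-- (2.2): for partitions of `m` with `n+1` parts and `μ_{n+1} ≥ λ_{n+1}`:
if `μ_{n+1} = λ_{n+1}` then `K⁻¹_{λ,μ} = K⁻¹_{(λ₁,…,λ_n),(μ₁,…,μ_n)}` (in `n` variables),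
and if `μ_{n+1} > λ_{n+1}` then `K⁻¹_{λ,μ} = 0`. -/
theorem stmt7 (n m : ℕ) (hmn : m ≤ n + 1)
    (K : (Fin (n + 1) → ℕ) → (Fin (n + 1) → ℕ) → ℤ) (hK : IsInvKostka (n + 1) K)
    (K' : (Fin n → ℕ) → (Fin n → ℕ) → ℤ) (hK' : IsInvKostka n K')
    (lam μ : Fin (n + 1) → ℕ) (hlam : lam ∈ Par (n + 1) m) (hμ : μ ∈ Par (n + 1) m)
    (hle : lam (Fin.last n) ≤ μ (Fin.last n)) :
    (μ (Fin.last n) = lam (Fin.last n) →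
        K lam μ = K' (fun i => lam i.castSucc) (fun i => μ i.castSucc)) ∧
    (lam (Fin.last n) < μ (Fin.last n) → K lam μ = 0) :=
  stmt7_general n m K hK K' hK' lam μ hlam hμ
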